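/- Suppose for each round t ∈ [T] and each k ∈ [K] we have 0 ≤ η·r̂^(k,t) ≤ 1, weights updated by φ^(k,t+1) = φ^(k,t)·exp(η r̂^(k,t)) with φ^(k,1) = 1, the mixture distribution p^(k,t) = (1−γ^t)φ^(k,t)/Φ^t + γ^t ξ^(k) with γ^t ∈ (0, 1/2], and ξ a probability vector. Then for any fixed k*, η Σ_t r̂^(k*,t) − ln K ≤ Σ_t (η/(1−γ^t)) Σ_k (p^(k,t) r̂^(k,t) + η p^(k,t)(r̂^(k,t))²). -/

import Mathlib

lemma exp_quad {x : ℝ} (h1 : 0 ≤ x) (h2 : x ≤ 1) : Real.exp x ≤ 1 + x + x ^ 2 := by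
  have h := Real.exp_bound' h1 h2 (n := 2) (by norm_num)
  norm_num [Finset.sum_range_succ, Nat.factorial] at h
  nlinarith [sq_nonneg x]

theorem central_regret_inequality (K : ℕ) (hK : 1 ≤ K) (η : ℝ) (hη : 0 < η)
    (T : ℕ)
    (r φ p : Fin K → ℕ → ℝ) (γ : ℕ → ℝ) (ξ : Fin K → ℝ)
    (hr : ∀ k t, 0 ≤ η * r k t ∧ η * r k t ≤ 1)
    (hinit : ∀ k, φ k 1 = 1)
    (hupd : ∀ k t, 1 ≤ t → φ k (t + 1) = φ k t * Real.exp (η * r k t))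
    (hγ : ∀ t, 0 < γ t ∧ γ t ≤ 1/2)
    (hξ0 : ∀ k, 0 ≤ ξ k) (hξ1 : ∑ k, ξ k = 1)
    (hp : ∀ k t, p k t = (1 - γ t) * φ k t / (∑ j, φ j t) + γ t * ξ k)
    (kstar : Fin K) :
    η * ∑ t ∈ Finset.Icc 1 T, r kstar t - Real.log K ≤
      ∑ t ∈ Finset.Icc 1 T,
        (η / (1 - γ t)) * ∑ k, (p k t * r k t + η * p k t * (r k t) ^ 2) := by
  have hKpos : (0 : ℝ) < K := by exact_mod_cast hK
  -- positivity of weights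
  have hφpos : ∀ t, 1 ≤ t → ∀ k, 0 < φ k t := by
    intro t ht
    induction t with
    | zero => omega
    | succ n ih =>
      intro k
      rcases Nat.lt_or_ge 1 (n+1) with h | h
      · have hn : 1 ≤ n := by omega
        rw [hupd k n hn]
        exact mul_pos (ih hn k) (Real.exp_pos _)
      · have : n + 1 = 1 := by omega
        rw [this, hinit k]; norm_num
  set S : ℕ → ℝ := fun t => ∑ j, φ j t with hS
  have hSpos : ∀ t, 1 ≤ t → 0 < S t := by
    intro t ht
    exact Finset.sum_pos (fun j _ => hφpos t ht j) ⟨⟨0, by omega⟩, Finset.mem_univ _⟩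
  have hS1 : S 1 = K := by
    simp [hS, hinit]
  -- per-step bound
  have step : ∀ t, 1 ≤ t → Real.log (S (t+1)) ≤ Real.log (S t) +
      (η / (1 - γ t)) * ∑ k, (p k t * r k t + η * p k t * (r k t) ^ 2) := by
    intro t ht
    obtain ⟨hγ0, hγh⟩ := hγ t
    have hγ1 : (0:ℝ) < 1 - γ t := by linarith
    set X := (η / (1 - γ t)) * ∑ k, (p k t * r k t + η * p k t * (r k t) ^ 2) with hX
    have hXval : X = (1 / (1 - γ t)) * ∑ k, p k t * (η * r k t + (η * r k t)^2) := by
      rw [hX, Finset.mul_sum, Finset.mul_sum]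
      congr 1; funext k; ring
    -- φ in terms of p
    have hφp : ∀ k, φ k t = S t * (p k t - γ t * ξ k) / (1 - γ t) := by
      intro k
      have := hp k t
      field_simp [hS] at this ⊢
      rw [this]; ring_nf
      field_simp [(hSpos t ht).ne']
      ring
      have hSt : (∑ j, φ j t) = S t := rfl
      rw [hSt]
      simp only [mul_inv_cancel_right₀ (hSpos t ht).ne']
      ring
    have key : S (t+1) ≤ S t * (1 + X) := by
      have e1 : S (t+1) = ∑ k, φ k t * Real.exp (η * r k t) := by
        simp [hS]; exact Finset.sum_congr rfl fun k _ => hupd k t ht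
      have e2 : S (t+1) ≤ ∑ k, φ k t * (1 + η * r k t + (η * r k t)^2) := by
        rw [e1]
        refine Finset.sum_le_sum fun k _ => ?_
        exact mul_le_mul_of_nonneg_left (exp_quad (hr k t).1 (hr k t).2) (hφpos t ht k).le
      have e3 : ∑ k, φ k t * (1 + η * r k t + (η * r k t)^2)
          = S t + ∑ k, φ k t * (η * r k t + (η * r k t)^2) := by
        rw [hS, ← Finset.sum_add_distrib]
        exact Finset.sum_congr rfl fun k _ => by ring
      have e4 : ∑ k, φ k t * (η * r k t + (η * r k t)^2) ≤ S t * X := by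
        rw [hXval, ← mul_assoc, Finset.mul_sum]
        refine Finset.sum_le_sum fun k _ => ?_
        rw [hφp k]
        have hnn : 0 ≤ η * r k t + (η * r k t)^2 := by
          have := (hr k t).1; positivity
        have h1 : S t * (p k t - γ t * ξ k) / (1 - γ t) ≤ S t * (1 / (1 - γ t)) * p k t := by
          rw [div_le_iff₀ hγ1]
          have : S t * (1 / (1 - γ t)) * p k t * (1 - γ t) = S t * p k t := by
            field_simp
          rw [this]
          have : 0 ≤ γ t * ξ k := mul_nonneg hγ0.le (hξ0 k)
          nlinarith [hSpos t ht]
        calc S t * (p k t - γ t * ξ k) / (1 - γ t) * (η * r k t + (η * r k t)^2)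
            ≤ S t * (1 / (1 - γ t)) * p k t * (η * r k t + (η * r k t)^2) :=
              mul_le_mul_of_nonneg_right h1 hnn
          _ = S t * (1 / (1 - γ t)) * (p k t * (η * r k t + (η * r k t)^2)) := by ring
      calc S (t+1) ≤ S t + ∑ k, φ k t * (η * r k t + (η * r k t)^2) := by
            rw [← e3]; exact e2
        _ ≤ S t + S t * X := by linarith
        _ = S t * (1 + X) := by ring
    have hXnn : 0 ≤ X := by
      rw [hXval]
      apply mul_nonneg (by positivity)
      apply Finset.sum_nonneg
      intro k _
      have hpnn : 0 ≤ p k t := by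
        rw [hp k t]
        have : 0 ≤ (1 - γ t) * φ k t / S t :=
          div_nonneg (mul_nonneg hγ1.le (hφpos t ht k).le) (hSpos t ht).le
        have := mul_nonneg hγ0.le (hξ0 k)
        simp only [hS] at *
        linarith
      have := (hr k t).1
      positivity
    calc Real.log (S (t+1)) ≤ Real.log (S t * (1 + X)) := by
          apply Real.log_le_log (hSpos (t+1) (by omega)) key
      _ = Real.log (S t) + Real.log (1 + X) := Real.log_mul (hSpos t ht).ne' (by linarith)
      _ ≤ Real.log (S t) + X := by
          have := Real.log_le_sub_one_of_pos (show (0:ℝ) < 1 + X by linarith)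
          linarith
  -- lower bound via kstar
  have hφstar : ∀ T : ℕ, φ kstar (T+1) = Real.exp (η * ∑ t ∈ Finset.Icc 1 T, r kstar t) := by
    intro T
    induction T with
    | zero => simp [hinit]
    | succ n ih =>
      rw [hupd kstar (n+1) (by omega), ih, Finset.sum_Icc_succ_top (by omega), ← Real.exp_add]
      ring_nf
  -- telescoping
  have tele : ∀ T : ℕ, Real.log (S (T+1)) ≤ Real.log (S 1) +
      ∑ t ∈ Finset.Icc 1 T, (η / (1 - γ t)) * ∑ k, (p k t * r k t + η * p k t * (r k t) ^ 2) := by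
    intro T
    induction T with
    | zero => simp
    | succ n ih =>
      rw [Finset.sum_Icc_succ_top (by omega)]
      have := step (n+1) (by omega)
      linarith
  have hlow : η * ∑ t ∈ Finset.Icc 1 T, r kstar t ≤ Real.log (S (T+1)) := by
    have h1 : φ kstar (T+1) ≤ S (T+1) :=
      Finset.single_le_sum (fun j _ => (hφpos (T+1) (by omega) j).le) (Finset.mem_univ kstar)
    have := Real.log_le_log (by rw [hφstar T]; exact Real.exp_pos _) h1
    rwa [hφstar T, Real.log_exp] at this
  have := tele T
  rw [hS1] at this
  linarith
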